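/- arXiv:1007.2628 — 7 statements merged into one kernel-verified Lean document; each statement's English description precedes it below -/
import Mathlib

section
/- Let q be a primitive l-th root of unity with l > 1, and let f = 1 - (1-q)·x∂ in the quantized Weyl algebra A_q. Then f^l = 1 - (1-q)^l · x^l · ∂^l. -/
open Polynomial Finset

/-- Let `q` be a primitive `l`-th root of unity with `l > 1` and `f = 1 - (1-q)·x∂`
in the quantized Weyl algebra `A_q`. Then `f^l = 1 - (1-q)^l • (x^l·∂^l)`. -/
theorem stmt7 {A : Type*} [Ring A] [Algebra ℂ A] {l : ℕ} (hl : 1 < l) (q : ℂ)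
    (hq : IsPrimitiveRoot q l) (x d : A) (h : d * x - q • (x * d) = 1)
    (f : A) (hf : f = 1 - (1 - q) • (x * d)) :
    f ^ l = 1 - (1 - q) ^ l • (x ^ l * d ^ l) := by
  have hdx : d * x = q • (x * d) + 1 := by rw [← h]; abel
  -- commutation of powers of d with x
  have key : ∀ n : ℕ, d ^ (n + 1) * x
      = q ^ (n + 1) • (x * d ^ (n + 1)) + (∑ i ∈ range (n + 1), q ^ i) • d ^ n := by
    intro n
    induction n with
    | zero => simpa using hdx
    | succ n ih =>
      have : d ^ (n + 2) * x = d * (d ^ (n + 1) * x) := by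
        rw [← mul_assoc, pow_succ']
      rw [this, ih, Finset.sum_range_succ]
      rw [mul_add, mul_smul_comm, mul_smul_comm, ← mul_assoc, hdx]
      rw [add_mul, smul_mul_assoc, one_mul, mul_assoc, ← pow_succ']
      rw [smul_add, smul_smul]
      simp only [Finset.sum_range_succ]
      simp only [← pow_succ']
      module
  -- multiplication of x^n d^n by x d on the right
  have hgx : ∀ n : ℕ, (x ^ n * d ^ n) * (x * d)
      = q ^ n • (x ^ (n + 1) * d ^ (n + 1)) + (∑ i ∈ range n, q ^ i) • (x ^ n * d ^ n) := by
    intro n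
    cases n with
    | zero => simp
    | succ n =>
      have e1 : (x ^ (n + 1) * d ^ (n + 1)) * (x * d) = x ^ (n + 1) * (d ^ (n + 1) * x) * d := by
        noncomm_ring
      have e2 : x ^ (n + 1) * (x * d ^ (n + 1)) * d = x ^ (n + 1 + 1) * d ^ (n + 1 + 1) := by
        rw [← mul_assoc, ← pow_succ, mul_assoc, ← pow_succ]
      have e3 : x ^ (n + 1) * d ^ n * d = x ^ (n + 1) * d ^ (n + 1) := by
        rw [mul_assoc, ← pow_succ]
      rw [e1, key n, mul_add, add_mul, mul_smul_comm, smul_mul_assoc, mul_smul_comm,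
        smul_mul_assoc, e2, e3]
  have hq1 : q ≠ 1 := hq.ne_one hl
  have hgeom : ∀ n : ℕ, (1 - q) * (∑ i ∈ range n, q ^ i) = 1 - q ^ n := by
    intro n
    have := geom_sum_mul q n
    linear_combination -this
  -- multiplication of x^n d^n by f on the right
  have hgf : ∀ n : ℕ, (x ^ n * d ^ n) * f
      = q ^ n • (x ^ n * d ^ n) - ((1 - q) * q ^ n) • (x ^ (n + 1) * d ^ (n + 1)) := by
    intro n
    rw [hf, mul_sub, mul_one, mul_smul_comm, hgx n]
    rw [smul_add, smul_smul, smul_smul, hgeom n]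
    module
  -- main induction via aeval of polynomial products
  have hB : ∀ n : ℕ, (Polynomial.aeval f) (∏ k ∈ range n, (Polynomial.C (q ^ k) - Polynomial.X))
      = (∏ k ∈ range n, ((1 - q) * q ^ k)) • (x ^ n * d ^ n) := by
    intro n
    induction n with
    | zero => simp
    | succ n ih =>
      rw [Finset.prod_range_succ, map_mul, ih, map_sub, aeval_X, aeval_C]
      rw [smul_mul_assoc, mul_sub, ← Algebra.commutes, ← Algebra.smul_def, hgf n]
      rw [Finset.prod_range_succ]
      module
  have hpos : 0 < l := by omega
  have hXl : (X : ℂ[X]) ^ l - C 1 = ∏ i ∈ range l, (X - C (q ^ i * 1)) :=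
    X_pow_sub_C_eq_prod hq hpos (one_pow l)
  have hP : (∏ k ∈ range l, (Polynomial.C (q ^ k) - Polynomial.X))
      = (-1 : ℂ[X]) ^ l * ((X : ℂ[X]) ^ l - 1) := by
    calc ∏ k ∈ range l, (C (q ^ k) - X)
        = ∏ k ∈ range l, ((-1) * (X - C (q ^ k * 1))) := by
          refine Finset.prod_congr rfl fun k _ => ?_
          rw [mul_one]; ring
      _ = (-1 : ℂ[X]) ^ l * ∏ k ∈ range l, (X - C (q ^ k * 1)) := by
          rw [Finset.prod_mul_distrib, Finset.prod_const, Finset.card_range]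
      _ = (-1 : ℂ[X]) ^ l * ((X : ℂ[X]) ^ l - 1) := by rw [← hXl, map_one]
  have hP2 : (∏ k ∈ range l, (Polynomial.C (q ^ k) - Polynomial.X))
      = ((-1 : ℂ) ^ l) • ((X : ℂ[X]) ^ l - 1) := by
    rw [hP, smul_eq_C_mul, map_pow, map_neg, map_one]
  -- product of the powers of q
  have hprodq : (∏ k ∈ range l, q ^ k) = (-1 : ℂ) ^ (l + 1) := by
    have h0 := congrArg (Polynomial.eval (0 : ℂ)) hP
    simp only [Polynomial.eval_prod, eval_mul, eval_pow, eval_neg, eval_one, eval_sub,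
      eval_C, eval_X, sub_zero] at h0
    rw [zero_pow hpos.ne', zero_sub] at h0
    rw [h0, pow_succ]
  have hscal : (∏ k ∈ range l, ((1 - q) * q ^ k)) = (1 - q) ^ l * (-1 : ℂ) ^ (l + 1) := by
    rw [Finset.prod_mul_distrib, Finset.prod_const, Finset.card_range, hprodq]
  have E : ((-1 : ℂ) ^ l) • (f ^ l - 1)
      = ((1 - q) ^ l * (-1 : ℂ) ^ (l + 1)) • (x ^ l * d ^ l) := by
    have hBl := hB l
    rw [hP2, map_smul, map_sub, map_pow, aeval_X, map_one, hscal] at hBl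
    exact hBl
  have h1 : ((-1 : ℂ) ^ l) * ((-1 : ℂ) ^ l) = 1 := by
    rw [← pow_add]
    exact Even.neg_one_pow ⟨l, rfl⟩
  have h2 : ((-1 : ℂ) ^ l) * ((1 - q) ^ l * (-1 : ℂ) ^ (l + 1)) = -(1 - q) ^ l := by
    have h3 : ((-1 : ℂ) ^ l) * ((-1 : ℂ) ^ (l + 1)) = -1 := by
      rw [← pow_add]
      exact Odd.neg_one_pow ⟨l, by ring⟩
    linear_combination (1 - q) ^ l * h3
  have E2 := congrArg (fun z => ((-1 : ℂ) ^ l) • z) E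
  simp only [smul_smul, h1, h2, one_smul] at E2
  rw [neg_smul, sub_eq_iff_eq_add] at E2
  rw [E2]
  abel
end

section
/- Let n ≥ 1 and let m_1, ..., m_n be nonnegative integers such that at least two of them are nonzero, and let c ∈ ℂ. Then the polynomial c - Σ_{j=1}^n m_j · X_j · Y_j is irreducible in the polynomial ring ℂ[X_1, ..., X_n, Y_1, ..., Y_n]. -/
open MvPolynomial

theorem aux_linear_irreducible {R : Type*} [CommRing R] [IsDomain R] (a b : R)
    (hb : b ≠ 0) (h : ∀ d : R, d ∣ a → d ∣ b → IsUnit d) :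
    Irreducible (Polynomial.C a + Polynomial.C b * Polynomial.X) := by
  set p := Polynomial.C a + Polynomial.C b * Polynomial.X with hp
  have hdeg : p.degree = 1 := by
    rw [hp, add_comm]; exact Polynomial.degree_linear hb
  have hnd : p.natDegree = 1 := Polynomial.natDegree_eq_of_degree_eq_some hdeg
  have hp0 : p ≠ 0 := fun h0 => by simp [h0] at hdeg
  have key : ∀ q : Polynomial R, q ∣ p → q.natDegree = 0 → IsUnit q := by
    intro q hq hq0
    have hqC : q = Polynomial.C (q.coeff 0) := Polynomial.eq_C_of_natDegree_eq_zero hq0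
    rw [hqC] at hq ⊢
    rw [Polynomial.C_dvd_iff_dvd_coeff] at hq
    have hda : q.coeff 0 ∣ a := by simpa [hp] using hq 0
    have hdb : q.coeff 0 ∣ b := by simpa [hp, Polynomial.coeff_C] using hq 1
    exact (Polynomial.isUnit_C).mpr (h _ hda hdb)
  constructor
  · intro hu
    have := Polynomial.natDegree_eq_zero_of_isUnit hu
    omega
  · intro q r hqr
    have hq0 : q ≠ 0 := fun h0 => hp0 (by simp [hqr, h0])
    have hr0 : r ≠ 0 := fun h0 => hp0 (by simp [hqr, h0])
    have hsum : q.natDegree + r.natDegree = 1 := by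
      rw [← Polynomial.natDegree_mul hq0 hr0, ← hqr, hnd]
    rcases Nat.eq_zero_or_pos q.natDegree with h1 | h1
    · exact Or.inl (key q ⟨r, hqr⟩ h1)
    · exact Or.inr (key r ⟨q, by rw [hqr, mul_comm]⟩ (by omega))

theorem aux_prime_X {σ : Type*} {R : Type*} [CommRing R] [IsDomain R] (v : σ) :
    Prime (MvPolynomial.X v : MvPolynomial σ R) := by
  classical
  let e : MvPolynomial σ R ≃ₐ[R] Polynomial (MvPolynomial {b : σ // b ≠ v} R) :=
    (renameEquiv R (Equiv.optionSubtypeNe v).symm).trans (optionEquivLeft R {b : σ // b ≠ v})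
  rw [← MulEquiv.prime_iff e.toMulEquiv]
  have : e (X v) = Polynomial.X := by
    simp [e, Equiv.optionSubtypeNe_symm_self, optionEquivLeft_X_none]
  rw [show e.toMulEquiv (X v) = e (X v) from rfl, this]
  exact Polynomial.prime_X

/-- Let `n ≥ 1` and `m_1, …, m_n` be nonnegative integers, at least two of which
are nonzero, and `c ∈ ℂ`. Then `c - ∑ m_j X_j Y_j` is irreducible in
`ℂ[X_1, …, X_n, Y_1, …, Y_n]`. -/
theorem stmt10 {n : ℕ} (hn : 1 ≤ n) (m : Fin n → ℕ) (c : ℂ)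
    (hm : ∃ j k : Fin n, j ≠ k ∧ m j ≠ 0 ∧ m k ≠ 0) :
    Irreducible ((C c : MvPolynomial (Fin n ⊕ Fin n) ℂ)
      - ∑ j : Fin n, (m j : MvPolynomial (Fin n ⊕ Fin n) ℂ)
          * X (Sum.inl j) * X (Sum.inr j)) := by
  classical
  obtain ⟨j, k, hjk, hmj, hmk⟩ := hm
  set v₀ : Fin n ⊕ Fin n := Sum.inr k with hv₀
  let σ' := {i : Fin n ⊕ Fin n // i ≠ v₀}
  let e : MvPolynomial (Fin n ⊕ Fin n) ℂ ≃ₐ[ℂ] Polynomial (MvPolynomial σ' ℂ) :=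
    (renameEquiv ℂ (Equiv.optionSubtypeNe v₀).symm).trans (optionEquivLeft ℂ σ')
  have hXk : e (X v₀) = Polynomial.X := by
    simp [e, Equiv.optionSubtypeNe_symm_self, optionEquivLeft_X_none]
  have hX : ∀ (i : Fin n ⊕ Fin n) (h : i ≠ v₀),
      e (X i) = Polynomial.C (X (⟨i, h⟩ : σ')) := by
    intro i h
    simp [e, Equiv.optionSubtypeNe_symm_of_ne h, optionEquivLeft_X_some]
  have hCe : ∀ r : ℂ, e (C r) = Polynomial.C (C r) := fun r => by
    simp [e, optionEquivLeft_C]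
  have hil : ∀ j' : Fin n, (Sum.inl j' : Fin n ⊕ Fin n) ≠ v₀ := fun j' => by simp [hv₀]
  let xl : Fin n → σ' := fun j' => ⟨Sum.inl j', hil j'⟩
  have hir : ∀ j' : Fin n, j' ≠ k → (Sum.inr j' : Fin n ⊕ Fin n) ≠ v₀ := fun j' h => by
    simp [hv₀, h]
  let w : Fin n → σ' := fun j' => if h : j' = k then xl k else ⟨Sum.inr j', hir j' h⟩
  have hw : ∀ j' : Fin n, j' ≠ k → (w j' : Fin n ⊕ Fin n) = Sum.inr j' := by
    intro j' h; simp [w, h]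
  set B : MvPolynomial σ' ℂ := -(C (m k : ℂ) * X (xl k)) with hB
  set A : MvPolynomial σ' ℂ :=
    C c - ∑ j' ∈ Finset.univ.erase k, C (m j' : ℂ) * X (xl j') * X (w j') with hA
  rw [← MulEquiv.irreducible_iff e]
  have hEP : e ((C c : MvPolynomial (Fin n ⊕ Fin n) ℂ)
      - ∑ j' : Fin n, (m j' : MvPolynomial (Fin n ⊕ Fin n) ℂ)
          * X (Sum.inl j') * X (Sum.inr j'))
      = Polynomial.C A + Polynomial.C B * Polynomial.X := by
    rw [map_sub, map_sum, hCe,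
      ← Finset.add_sum_erase _ _ (Finset.mem_univ k)]
    have hterm : ∀ j' ∈ Finset.univ.erase k,
        e ((m j' : MvPolynomial (Fin n ⊕ Fin n) ℂ) * X (Sum.inl j') * X (Sum.inr j'))
        = Polynomial.C (C (m j' : ℂ) * X (xl j') * X (w j')) := by
      intro j' hj'
      have hj'k : j' ≠ k := Finset.ne_of_mem_erase hj'
      rw [map_mul, map_mul, map_natCast, hX _ (hil j'), hX _ (hir j' hj'k),
        show (⟨Sum.inr j', hir j' hj'k⟩ : σ') = w j' from Subtype.ext (hw j' hj'k).symm]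
      simp only [← map_natCast (C : ℂ →+* MvPolynomial σ' ℂ),
        ← map_natCast (Polynomial.C : MvPolynomial σ' ℂ →+* Polynomial (MvPolynomial σ' ℂ)),
        map_mul]
      rfl
    rw [Finset.sum_congr rfl hterm]
    rw [map_mul, map_mul, map_natCast, hX _ (hil k), hXk]
    rw [hA, hB, map_sub, map_neg, map_sum]
    simp only [← map_natCast (C : ℂ →+* MvPolynomial σ' ℂ),
      ← map_natCast (Polynomial.C : MvPolynomial σ' ℂ →+* Polynomial (MvPolynomial σ' ℂ)),
      map_mul]
    push_cast
    ring
  rw [hEP]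
  have hwxl : ∀ a b : Fin n, a ≠ k → w a ≠ xl b := by
    intro a b ha hab
    have := congrArg Subtype.val hab
    rw [hw a ha] at this
    simp [xl] at this
  have hxlinj : ∀ a b : Fin n, xl a = xl b → a = b := by
    intro a b hab
    have := congrArg Subtype.val hab
    simpa [xl] using this
  set μ : σ' →₀ ℕ := Finsupp.single (xl j) 1 + Finsupp.single (w j) 1 with hμ
  have hμxlk : μ (xl k) = 0 := by
    rw [hμ, Finsupp.add_apply, Finsupp.single_apply, Finsupp.single_apply,
      if_neg (fun h => hjk (hxlinj _ _ h)), if_neg (fun h => hwxl j k hjk h)]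
    rfl
  have hcoeffA : coeff μ A = -(m j : ℂ) := by
    rw [hA, coeff_sub]
    have hμ0 : μ ≠ 0 := by
      intro h0
      have h1 : μ (xl j) = 0 := by rw [h0]; rfl
      rw [hμ, Finsupp.add_apply, Finsupp.single_apply, if_pos rfl] at h1
      omega
    rw [coeff_C, if_neg (Ne.symm hμ0)]
    have hterm2 : ∀ (r : ℂ) (a b : σ'), C r * X a * X b
        = monomial (Finsupp.single a 1 + Finsupp.single b 1) r := by
      intro r a b
      rw [C_apply, X, X, monomial_mul, monomial_mul]
      simp
    have hsum : ∑ j' ∈ Finset.univ.erase k, coeff μ (C (m j' : ℂ) * X (xl j') * X (w j'))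
        = (m j : ℂ) := by
      rw [Finset.sum_eq_single j]
      · rw [hterm2, coeff_monomial, if_pos rfl]
      · intro j' hj' hne
        have hj'k : j' ≠ k := Finset.ne_of_mem_erase hj'
        rw [hterm2, coeff_monomial, if_neg]
        intro heq
        have h2 := DFunLike.congr_fun heq (xl j')
        rw [hμ, Finsupp.add_apply, Finsupp.add_apply, Finsupp.single_apply, Finsupp.single_apply,
          Finsupp.single_apply, Finsupp.single_apply, if_pos rfl,
          if_neg (fun h => hwxl j' j' hj'k h),
          if_neg (fun h => hne (hxlinj _ _ h).symm),
          if_neg (fun h => hwxl j j' hjk h)] at h2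
        omega
      · intro hj
        exact absurd (Finset.mem_erase.mpr ⟨hjk, Finset.mem_univ j⟩) hj
    rw [coeff_sum, hsum]
    ring
  have hBne : B ≠ 0 := by
    rw [hB, neg_ne_zero]
    refine mul_ne_zero ?_ (X_ne_zero _)
    simpa using (Nat.cast_ne_zero (R := ℂ)).mpr hmk
  apply aux_linear_irreducible A B hBne
  intro d hdA hdB
  have hirr := (aux_prime_X (R := ℂ) (xl k)).irreducible
  have hu : IsUnit (C (m k : ℂ) : MvPolynomial σ' ℂ) :=
    (isUnit_iff_ne_zero.mpr (by exact_mod_cast hmk)).map C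
  have hdX : d ∣ X (xl k) := by
    have h1 : d ∣ C (m k : ℂ) * X (xl k) := by
      rw [hB] at hdB
      exact dvd_neg.mp hdB
    exact h1.trans (associated_unit_mul_left _ _ hu).dvd
  obtain ⟨t, ht⟩ := hdX
  rcases hirr.isUnit_or_isUnit ht with hud | hut
  · exact hud
  · exfalso
    obtain ⟨t', htt'⟩ := hut.exists_right_inv
    have hXd : X (xl k) ∣ d := ⟨t', by rw [ht, mul_assoc, htt', mul_one]⟩
    obtain ⟨q, hq⟩ := hXd.trans hdA
    have h0 : coeff μ A = 0 := by
      rw [hq, mul_comm, coeff_mul_X',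
        if_neg (by simp [Finsupp.mem_support_iff, hμxlk])]
    rw [hcoeffA, neg_eq_zero, Nat.cast_eq_zero] at h0
    exact hmj h0
end

section
/- For l ≥ 1 let q_l = exp(2πi/l) and let [a]_{q_l} = 1 + q_l + ... + q_l^{a-1} denote the quantum integer. Then for l > 6 and for every integer a with (l-1)/2 ≤ a ≤ l - (l-1)/2, one has |[a]_{q_l}| ≥ 2; moreover |[a]_{q_l}| ≥ 1 for all 1 ≤ a ≤ l-1. Consequently the quantum factorial satisfies |[l-1]_{q_l}!| → ∞ as l → ∞. -/
open Finset Filter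

/-- The quantum integer `[a]_q = 1 + q + ⋯ + q^(a-1)`. -/
noncomputable def qInt (q : ℂ) (a : ℕ) : ℂ := ∑ i ∈ Finset.range a, q ^ i

/-- The quantum factorial `[m]_q! = [m]_q [m-1]_q ⋯ [1]_q`. -/
noncomputable def qFact (q : ℂ) (m : ℕ) : ℂ := ∏ a ∈ Finset.Icc 1 m, qInt q a

lemma abs_exp_mul_I_sub_one (x : ℝ) :
    ‖Complex.exp (x * Complex.I) - 1‖ = 2 * |Real.sin (x / 2)| := by
  have h : Complex.exp ((x : ℂ) * Complex.I) - 1 =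
      ((Real.cos x - 1 : ℝ) : ℂ) + ((Real.sin x : ℝ) : ℂ) * Complex.I := by
    rw [Complex.exp_mul_I, ← Complex.ofReal_cos, ← Complex.ofReal_sin]
    push_cast
    ring
  rw [h, Complex.norm_def, Complex.normSq_add_mul_I]
  have hs : Real.sin x ^ 2 + Real.cos x ^ 2 = 1 := Real.sin_sq_add_cos_sq x
  have hc : Real.cos x = 1 - 2 * Real.sin (x / 2) ^ 2 := by
    have h2 : Real.cos (2 * (x / 2)) = Real.cos (x / 2) ^ 2 - Real.sin (x / 2) ^ 2 :=
      Real.cos_two_mul' (x / 2)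
    have h3 : Real.sin (x / 2) ^ 2 + Real.cos (x / 2) ^ 2 = 1 := Real.sin_sq_add_cos_sq (x / 2)
    have : (2 : ℝ) * (x / 2) = x := by ring
    rw [this] at h2
    linarith
  have key : (Real.cos x - 1) ^ 2 + Real.sin x ^ 2 = (2 * |Real.sin (x / 2)|) ^ 2 := by
    rw [mul_pow, sq_abs]
    nlinarith
  rw [key, Real.sqrt_sq (by positivity)]

lemma exp_ne_one (l : ℕ) (hl : 2 ≤ l) :
    Complex.exp (((2 * Real.pi / l : ℝ) : ℂ) * Complex.I) ≠ 1 := by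
  intro h
  rw [Complex.exp_eq_one_iff] at h
  obtain ⟨n, hn⟩ := h
  have hI : ((2 * Real.pi / l : ℝ) : ℂ) = (n : ℂ) * (2 * Real.pi) := by
    have h2 : ((2 * Real.pi / l : ℝ) : ℂ) * Complex.I = ((n : ℂ) * (2 * Real.pi)) * Complex.I := by
      rw [hn]; ring
    exact mul_right_cancel₀ Complex.I_ne_zero h2
  have hR : (2 * Real.pi / l : ℝ) = (n : ℝ) * (2 * Real.pi) := by exact_mod_cast hI
  have hl0 : (0 : ℝ) < l := by positivity
  have hl2 : (2 : ℝ) ≤ l := by exact_mod_cast hl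
  have hpi : 0 < Real.pi := Real.pi_pos
  have heq : 2 * Real.pi = (n : ℝ) * (2 * Real.pi) * l := by
    field_simp at hR
    linear_combination 2 * Real.pi * hR
  have hnl : ((n * l : ℤ) : ℝ) = 1 := by
    push_cast
    nlinarith
  have hnl' : (n * (l : ℤ)) = 1 := by exact_mod_cast hnl
  have hl2' : (2 : ℤ) ≤ (l : ℤ) := by exact_mod_cast hl
  rcases le_or_gt n 0 with h0 | h0
  · nlinarith
  · have : 1 ≤ n := h0
    nlinarith

lemma abs_qInt (l a : ℕ) (hl : 2 ≤ l) (ha : a ≤ l) :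
    ‖qInt (Complex.exp (2 * Real.pi * Complex.I / l)) a‖
      = Real.sin (Real.pi * a / l) / Real.sin (Real.pi / l) := by
  have hl0 : (0 : ℝ) < l := by positivity
  have hpi : 0 < Real.pi := Real.pi_pos
  have hx : (2 * (Real.pi : ℂ) * Complex.I / l) = ((2 * Real.pi / l : ℝ) : ℂ) * Complex.I := by
    push_cast
    ring
  set x : ℝ := 2 * Real.pi / l with hxdef
  have hq : Complex.exp (((x : ℝ) : ℂ) * Complex.I) ≠ 1 := exp_ne_one l hl
  rw [hx]
  unfold qInt
  rw [geom_sum_eq hq, norm_div]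
  have hpow : Complex.exp (((x : ℝ) : ℂ) * Complex.I) ^ a
      = Complex.exp (((a * x : ℝ) : ℂ) * Complex.I) := by
    rw [← Complex.exp_nat_mul]
    push_cast
    ring_nf
  rw [hpow, abs_exp_mul_I_sub_one, abs_exp_mul_I_sub_one]
  have h1 : (a : ℝ) * x / 2 = Real.pi * a / l := by
    rw [hxdef]; field_simp
  have h2 : x / 2 = Real.pi / l := by rw [hxdef]; ring
  rw [h1, h2]
  have hnn1 : 0 ≤ Real.sin (Real.pi * a / l) := by
    apply Real.sin_nonneg_of_nonneg_of_le_pi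
    · positivity
    · rw [div_le_iff₀ hl0]
      have : (a : ℝ) ≤ l := by exact_mod_cast ha
      nlinarith
  have hnn2 : 0 < Real.sin (Real.pi / l) := by
    apply Real.sin_pos_of_pos_of_lt_pi
    · positivity
    · rw [div_lt_iff₀ hl0]
      have : (2 : ℝ) ≤ l := by exact_mod_cast hl
      nlinarith
  rw [abs_of_nonneg hnn1, abs_of_nonneg (le_of_lt hnn2)]
  rw [mul_div_mul_left _ _ (two_ne_zero)]

lemma sin_ge_cos (t d : ℝ) (h : |t - Real.pi / 2| ≤ d) (hd : d ≤ Real.pi) :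
    Real.cos d ≤ Real.sin t := by
  have h1 : Real.sin t = Real.cos (t - Real.pi / 2) := by
    rw [← Real.cos_pi_div_two_sub t, ← Real.cos_neg]
    ring_nf
  rw [h1, ← Real.cos_abs (t - Real.pi / 2)]
  exact Real.cos_le_cos_of_nonneg_of_le_pi (abs_nonneg _) hd h

/-- Key quantitative bound: if `|π a / l - π/2| ≤ d` and `cos d ≥ 2 sin(π/l)` then
`|[a]_{q_l}| ≥ 2`. -/
lemma two_le_abs_qInt (l a : ℕ) (hl : 2 ≤ l) (ha : a ≤ l) (d : ℝ)
    (hd1 : |Real.pi * a / l - Real.pi / 2| ≤ d) (hd2 : d ≤ Real.pi)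
    (hd3 : 2 * Real.sin (Real.pi / l) ≤ Real.cos d) :
    2 ≤ ‖qInt (Complex.exp (2 * Real.pi * Complex.I / l)) a‖ := by
  rw [abs_qInt l a hl ha]
  have hl0 : (0 : ℝ) < l := by positivity
  have hs2 : 0 < Real.sin (Real.pi / l) := by
    apply Real.sin_pos_of_pos_of_lt_pi
    · positivity
    · rw [div_lt_iff₀ hl0]
      have : (2 : ℝ) ≤ l := by exact_mod_cast hl
      nlinarith [Real.pi_pos]
  rw [le_div_iff₀ hs2]
  calc 2 * Real.sin (Real.pi / l) ≤ Real.cos d := hd3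
    _ ≤ Real.sin (Real.pi * a / l) := sin_ge_cos _ _ hd1 hd2

lemma one_le_abs_qInt (l a : ℕ) (h1 : 1 ≤ a) (h2 : a ≤ l - 1) :
    1 ≤ ‖qInt (Complex.exp (2 * Real.pi * Complex.I / l)) a‖ := by
  have hl : 2 ≤ l := by omega
  have ha : a ≤ l := by omega
  rw [abs_qInt l a hl ha]
  have hl0 : (0 : ℝ) < l := by positivity
  have hpi : 0 < Real.pi := Real.pi_pos
  have hs2 : 0 < Real.sin (Real.pi / l) := by
    apply Real.sin_pos_of_pos_of_lt_pi
    · positivity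
    · rw [div_lt_iff₀ hl0]
      have : (2 : ℝ) ≤ l := by exact_mod_cast hl
      nlinarith
  rw [le_div_iff₀ hs2, one_mul]
  have hcos : Real.sin (Real.pi / l) = Real.cos (Real.pi / 2 - Real.pi / l) := by
    rw [Real.cos_pi_div_two_sub]
  rw [hcos]
  apply sin_ge_cos
  · have ha1 : (1 : ℝ) ≤ a := by exact_mod_cast h1
    have ha2 : (a : ℝ) ≤ (l : ℝ) - 1 := by
      have h2' : (a : ℝ) ≤ ((l - 1 : ℕ) : ℝ) := by exact_mod_cast h2
      have hl1 : ((l - 1 : ℕ) : ℝ) = (l : ℝ) - 1 := by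
        have h1l : (1 : ℕ) ≤ l := by omega
        push_cast [h1l]
        ring
      linarith [hl1.le]
    have hida : Real.pi * a / l * l = Real.pi * a := by field_simp
    have hid1 : Real.pi / l * l = Real.pi := by field_simp
    rw [abs_le]
    constructor
    · nlinarith [hida, hid1, ha1, ha2, hpi, hl0]
    · nlinarith [hida, hid1, ha1, ha2, hpi, hl0]
  · have : 0 ≤ Real.pi / l := by positivity
    linarith

set_option maxHeartbeats 1000000 in
/-- For `q_l = exp(2πi/l)`: if `l > 6` then `|[a]_{q_l}| ≥ 2` for every integer `a`
with `(l-1)/2 ≤ a ≤ l - (l-1)/2`; moreover `|[a]_{q_l}| ≥ 1` for all `1 ≤ a ≤ l-1`;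
consequently `|[l-1]_{q_l}!| → ∞` as `l → ∞`. -/
theorem stmt12 :
    (∀ l : ℕ, 6 < l → ∀ a : ℕ,
      ((l : ℝ) - 1) / 2 ≤ (a : ℝ) → (a : ℝ) ≤ (l : ℝ) - ((l : ℝ) - 1) / 2 →
      2 ≤ ‖qInt (Complex.exp (2 * Real.pi * Complex.I / l)) a‖) ∧
    (∀ l : ℕ, ∀ a : ℕ, 1 ≤ a → a ≤ l - 1 →
      1 ≤ ‖qInt (Complex.exp (2 * Real.pi * Complex.I / l)) a‖) ∧
    Tendsto (fun l : ℕ =>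
        ‖qFact (Complex.exp (2 * Real.pi * Complex.I / l)) (l - 1)‖)
      atTop atTop := by
  have hpi : 0 < Real.pi := Real.pi_pos
  refine ⟨?_, ?_, ?_⟩
  · -- Part 1
    intro l hl a ha1 ha2
    have hl0 : (0 : ℝ) < l := by
      have : (0 : ℕ) < l := by omega
      exact_mod_cast this
    have hl7 : (7 : ℝ) ≤ l := by exact_mod_cast (by omega : 7 ≤ l)
    have haln : a ≤ l := by
      have : (a : ℝ) ≤ l := by nlinarith
      exact_mod_cast this
    have hida : Real.pi * a / l * l = Real.pi * a := by field_simp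
    have hid2 : Real.pi / (2 * l) * l = Real.pi / 2 := by field_simp
    apply two_le_abs_qInt l a (by omega) haln (Real.pi / (2 * l))
    · rw [abs_le]
      constructor
      · nlinarith [hida, hid2, ha1, ha2, hpi, hl0]
      · nlinarith [hida, hid2, ha1, ha2, hpi, hl0]
    · have : Real.pi / (2 * l) ≤ Real.pi := by
        rw [div_le_iff₀ (by positivity)]
        nlinarith
      exact this
    · -- 2 sin(π/l) = 4 sin(π/(2l)) cos(π/(2l)) ≤ cos(π/(2l))
      have hdbl : Real.sin (Real.pi / l) =
          2 * Real.sin (Real.pi / (2 * l)) * Real.cos (Real.pi / (2 * l)) := by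
        rw [← Real.sin_two_mul]
        congr 1
        field_simp
      have hsle : Real.sin (Real.pi / (2 * l)) ≤ Real.pi / (2 * l) :=
        Real.sin_le (by positivity)
      have hsnn : 0 ≤ Real.sin (Real.pi / (2 * l)) := by
        apply Real.sin_nonneg_of_nonneg_of_le_pi
        · positivity
        · rw [div_le_iff₀ (by positivity)]
          nlinarith
      have hcnn : 0 ≤ Real.cos (Real.pi / (2 * l)) := by
        apply Real.cos_nonneg_of_mem_Icc
        constructor
        · have : 0 ≤ Real.pi / (2 * l) := by positivity
          linarith
        · rw [div_le_div_iff₀ (by positivity) (by norm_num : (0:ℝ) < 2)]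
          nlinarith
      have hquarter : Real.sin (Real.pi / (2 * l)) ≤ 1 / 4 := by
        have hpl : Real.pi / (2 * l) ≤ 1 / 4 := by
          rw [div_le_div_iff₀ (by positivity) (by norm_num : (0:ℝ) < 4)]
          nlinarith [Real.pi_lt_d2]
        linarith
      rw [hdbl]
      nlinarith
  · -- Part 2
    intro l a h1 h2
    exact one_le_abs_qInt l a h1 h2
  · -- Part 3
    have hcard : ∀ l : ℕ, (Finset.Icc ((l + 2) / 3) (2 * l / 3)).card
        = 2 * l / 3 + 1 - (l + 2) / 3 := fun l => Nat.card_Icc _ _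
    have hctend : Tendsto (fun l : ℕ => (Finset.Icc ((l + 2) / 3) (2 * l / 3)).card)
        atTop atTop := by
      rw [tendsto_atTop_atTop]
      intro b
      refine ⟨6 * b + 8, fun l hl => ?_⟩
      rw [hcard]
      omega
    have hpow : Tendsto (fun n : ℕ => (2 : ℝ) ^ n) atTop atTop :=
      tendsto_pow_atTop_atTop_of_one_lt (by norm_num)
    apply tendsto_atTop_mono' atTop _ (hpow.comp hctend)
    filter_upwards [eventually_ge_atTop 8] with l hl
    simp only [Function.comp_apply]
    -- |qFact| = product of |qInt|
    have habs : ‖qFact (Complex.exp (2 * Real.pi * Complex.I / l)) (l - 1)‖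
        = ∏ a ∈ Finset.Icc 1 (l - 1),
            ‖qInt (Complex.exp (2 * Real.pi * Complex.I / l)) a‖ := by
      unfold qFact
      exact norm_prod _ _
    rw [habs]
    set f : ℕ → ℝ := fun a => ‖qInt (Complex.exp (2 * Real.pi * Complex.I / l)) a‖
      with hf
    have hsub : Finset.Icc ((l + 2) / 3) (2 * l / 3) ⊆ Finset.Icc 1 (l - 1) := by
      apply Finset.Icc_subset_Icc <;> omega
    have hone : ∀ a ∈ Finset.Icc 1 (l - 1), 1 ≤ f a := by
      intro a haa
      rw [Finset.mem_Icc] at haa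
      exact one_le_abs_qInt l a haa.1 haa.2
    have htwo : ∀ a ∈ Finset.Icc ((l + 2) / 3) (2 * l / 3), 2 ≤ f a := by
      intro a haa
      rw [Finset.mem_Icc] at haa
      have h3a : l ≤ 3 * a := by omega
      have h3a' : 3 * a ≤ 2 * l := by omega
      have hl0 : (0 : ℝ) < l := by
        have : (0 : ℕ) < l := by omega
        exact_mod_cast this
      have hl8 : (8 : ℝ) ≤ l := by exact_mod_cast hl
      have h3aR : (l : ℝ) ≤ 3 * a := by exact_mod_cast h3a
      have h3aR' : (3 : ℝ) * a ≤ 2 * l := by exact_mod_cast h3a'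
      have hida : Real.pi * a / l * l = Real.pi * a := by field_simp
      apply two_le_abs_qInt l a (by omega) (by omega) (Real.pi / 6)
      · rw [abs_le]
        constructor
        · nlinarith [hida, h3aR, h3aR', hpi, hl0]
        · nlinarith [hida, h3aR, h3aR', hpi, hl0]
      · nlinarith
      · rw [Real.cos_pi_div_six]
        have hsle : Real.sin (Real.pi / l) ≤ Real.pi / l := Real.sin_le (by positivity)
        have hsqrt3 : (1.7 : ℝ) ≤ Real.sqrt 3 := by
          nlinarith [Real.sq_sqrt (by norm_num : (3:ℝ) ≥ 0), Real.sqrt_nonneg 3]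
        have hple : Real.pi / l ≤ Real.pi / 8 := by
          apply div_le_div_of_nonneg_left (le_of_lt hpi) (by norm_num) hl8
        nlinarith [Real.pi_lt_d2]
    calc (2 : ℝ) ^ (Finset.Icc ((l + 2) / 3) (2 * l / 3)).card
        = ∏ _a ∈ Finset.Icc ((l + 2) / 3) (2 * l / 3), (2 : ℝ) := by
          rw [Finset.prod_const]
      _ ≤ ∏ a ∈ Finset.Icc ((l + 2) / 3) (2 * l / 3), f a := by
          apply Finset.prod_le_prod (fun a _ => by norm_num) htwo
      _ ≤ ∏ a ∈ Finset.Icc 1 (l - 1), f a := by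
          rw [← Finset.prod_sdiff hsub]
          have h0 : 0 ≤ ∏ a ∈ Finset.Icc ((l + 2) / 3) (2 * l / 3), f a :=
            Finset.prod_nonneg fun a _ => norm_nonneg _
          have h1 : (1 : ℝ) ≤
              ∏ a ∈ Finset.Icc 1 (l - 1) \ Finset.Icc ((l + 2) / 3) (2 * l / 3), f a := by
            calc (1 : ℝ)
                = ∏ _a ∈ Finset.Icc 1 (l - 1) \ Finset.Icc ((l + 2) / 3) (2 * l / 3), (1:ℝ) := by
                  rw [Finset.prod_const_one]
              _ ≤ _ := Finset.prod_le_prod (fun a _ => zero_le_one)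
                  (fun a ha => hone a (Finset.mem_sdiff.mp ha).1)
          exact le_mul_of_one_le_left h0 h1
end

section
/- For l ≥ 1 let q_l = exp(2πi/l). Then lim_{l→∞} l·(q_l - 1)/[l-1]_{q_l}! = 0, where [m]_q! is the quantum factorial. Hence the quantity 1 + (l(q_l-1)/[l-1]_{q_l}!)·z converges to 1 as l → ∞ for any fixed z ∈ ℂ. -/
open Finset Filter

open Polynomial in
/-- For a primitive `l`-th root of unity `q`, `∏_{a=1}^{l-1} (1 - q^a) = l`. -/
lemma prod_one_sub_pow_aux13 {l : ℕ} (hl : 1 ≤ l) {q : ℂ} (hq : IsPrimitiveRoot q l) :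
    ∏ a ∈ Finset.Icc 1 (l - 1), (1 - q ^ a) = (l : ℂ) := by
  have hl0 : 0 < l := hl
  have h1 : (X : ℂ[X]) ^ l - 1 = ∏ ζ ∈ nthRootsFinset l (1 : ℂ), (X - C ζ) :=
    X_pow_sub_one_eq_prod hl0 hq
  have h3 : (1 : ℂ) ∈ nthRootsFinset l (1 : ℂ) := one_mem_nthRootsFinset hl0
  have h4 : (∑ i ∈ Finset.range l, (X : ℂ[X]) ^ i) * (X - 1)
      = (X - C 1) * ∏ ζ ∈ (nthRootsFinset l (1 : ℂ)).erase 1, (X - C ζ) := by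
    rw [geom_sum_mul, h1]
    exact (Finset.mul_prod_erase _ _ h3).symm
  rw [map_one, mul_comm ((X : ℂ[X]) - 1)] at h4
  have h5 : (∑ i ∈ Finset.range l, (X : ℂ[X]) ^ i)
      = ∏ ζ ∈ (nthRootsFinset l (1 : ℂ)).erase 1, (X - C ζ) :=
    mul_right_cancel₀ (X_sub_C_ne_zero 1) (by simpa using h4)
  have h6 : (l : ℂ) = ∏ ζ ∈ (nthRootsFinset l (1 : ℂ)).erase 1, (1 - ζ) := by
    have := congrArg (Polynomial.eval 1) h5
    simpa [eval_prod] using this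
  rw [h6]
  refine Finset.prod_nbij (fun a => q ^ a) ?_ ?_ ?_ ?_
  · intro a ha
    simp only [Finset.mem_coe, Finset.mem_Icc] at ha
    refine Finset.mem_coe.2 <|
      Finset.mem_erase.2 ⟨hq.pow_ne_one_of_pos_of_lt (by omega) (by omega), ?_⟩
    rw [Polynomial.mem_nthRootsFinset hl0, ← pow_mul, mul_comm, pow_mul, hq.pow_eq_one, one_pow]
  · intro a ha b hb hab
    simp only [Finset.mem_coe, Finset.mem_Icc] at ha hb
    exact hq.pow_inj (by omega) (by omega) hab
  · intro ζ hζ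
    rw [Finset.mem_coe, Finset.mem_erase, Polynomial.mem_nthRootsFinset hl0] at hζ
    have : NeZero l := ⟨by omega⟩
    obtain ⟨i, hi, rfl⟩ := hq.eq_pow_of_pow_eq_one hζ.2
    have hi0 : i ≠ 0 := by rintro rfl; exact hζ.1 (pow_zero q)
    exact ⟨i, Finset.mem_coe.2 (Finset.mem_Icc.2 ⟨by omega, by omega⟩), rfl⟩
  · intro a _; rfl

lemma norm_key_aux13 {l : ℕ} (hl : 2 ≤ l) {q : ℂ} (hq : IsPrimitiveRoot q l) :
    ‖(l : ℂ) * (q - 1) / qFact q (l - 1)‖ = ‖q - 1‖ ^ l := by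
  have hq1 : q ≠ 1 := hq.ne_one hl
  have hd : q - 1 ≠ 0 := sub_ne_zero.2 hq1
  have hcard : (Finset.Icc 1 (l - 1)).card = l - 1 := by rw [Nat.card_Icc]; omega
  have hfact : qFact q (l - 1) = (-1) ^ (l - 1) * (l : ℂ) / (q - 1) ^ (l - 1) := by
    unfold qFact qInt
    rw [Finset.prod_congr rfl (fun a _ => geom_sum_eq hq1 a), Finset.prod_div_distrib,
      Finset.prod_const, hcard]
    congr 1
    calc ∏ a ∈ Finset.Icc 1 (l - 1), (q ^ a - 1)
        = ∏ a ∈ Finset.Icc 1 (l - 1), (-1) * (1 - q ^ a) := by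
          refine Finset.prod_congr rfl fun a _ => by ring
      _ = (-1) ^ (l - 1) * (l : ℂ) := by
          rw [Finset.prod_mul_distrib, Finset.prod_const, hcard,
            prod_one_sub_pow_aux13 (by omega) hq]
  have hl0 : (0:ℝ) < l := by positivity
  rw [norm_div, hfact, norm_div, norm_mul, norm_mul, norm_pow, norm_pow]
  simp only [norm_neg, norm_one, one_pow, one_mul, Complex.norm_natCast]
  rw [div_div_eq_mul_div, mul_comm ((l:ℝ)) ‖q - 1‖, mul_assoc, mul_div_assoc,
    mul_div_cancel_left₀ _ (by positivity : (l:ℝ) ≠ 0)]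
  rw [← pow_succ']
  congr 1
  omega

/-- With `q_l = exp(2πi/l)`: `lim_{l→∞} l(q_l - 1)/[l-1]_{q_l}! = 0`; hence for any
fixed `z ∈ ℂ` the quantity `1 + (l(q_l-1)/[l-1]_{q_l}!)·z` converges to `1`. -/
theorem stmt13 :
    Tendsto (fun l : ℕ =>
        (l : ℂ) * (Complex.exp (2 * Real.pi * Complex.I / l) - 1)
          / qFact (Complex.exp (2 * Real.pi * Complex.I / l)) (l - 1))
      atTop (nhds 0) ∧
    ∀ z : ℂ, Tendsto (fun l : ℕ =>
        1 + ((l : ℂ) * (Complex.exp (2 * Real.pi * Complex.I / l) - 1)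
          / qFact (Complex.exp (2 * Real.pi * Complex.I / l)) (l - 1)) * z)
      atTop (nhds 1) := by
  have hmain : Tendsto (fun l : ℕ =>
      (l : ℂ) * (Complex.exp (2 * Real.pi * Complex.I / l) - 1)
        / qFact (Complex.exp (2 * Real.pi * Complex.I / l)) (l - 1))
      atTop (nhds 0) := by
    rw [tendsto_zero_iff_norm_tendsto_zero]
    refine squeeze_zero' (Filter.Eventually.of_forall fun l => norm_nonneg _)
      (g := fun l => (1/2 : ℝ) ^ l) ?_
      (tendsto_pow_atTop_nhds_zero_of_lt_one (by norm_num) (by norm_num))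
    filter_upwards [eventually_ge_atTop 32] with l hl
    have hq : IsPrimitiveRoot (Complex.exp (2 * Real.pi * Complex.I / l)) l :=
      Complex.isPrimitiveRoot_exp l (by omega)
    rw [norm_key_aux13 (by omega) hq]
    refine pow_le_pow_left₀ (norm_nonneg _) ?_ l
    have hlR : (32 : ℝ) ≤ (l : ℝ) := by exact_mod_cast hl
    have habs : ‖(2 * Real.pi * Complex.I / l)‖ = 2 * Real.pi / l := by
      rw [norm_div, norm_mul, norm_mul]
      simp [abs_of_pos Real.pi_pos]
    have h1 : ‖(2 * Real.pi * Complex.I / l)‖ ≤ 1 := by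
      rw [habs, div_le_one (by linarith)]
      nlinarith [Real.pi_le_four]
    have := Complex.norm_exp_sub_one_le h1
    rw [habs] at this
    calc ‖Complex.exp (2 * Real.pi * Complex.I / l) - 1‖
        ≤ 2 * (2 * Real.pi / l) := this
      _ ≤ 1 / 2 := by
          rw [mul_div_assoc', div_le_div_iff₀ (by linarith) (by norm_num)]
          nlinarith [Real.pi_le_four]
  exact ⟨hmain, fun z => by simpa using (hmain.mul_const z).const_add 1⟩
end

section
/- In the quantized Weyl algebra A^{(t)} over R = ℂ[t,t^{-1}], writing [∂^l, x^l] = Σ_{i=0}^{l} a_{i,l}·x^i·∂^i with a_{i,l} ∈ R, the top coefficient is a_{l,l} = t^{l²} - 1. -/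
lemma sub1 {R : Type*} [CommRing R] {A : Type*} [Ring A] [Algebra R A]
    (t : R) (x d : A) (h : d * x - t • (x * d) = 1) :
    ∀ n : ℕ, ∃ c : R, d * x ^ (n+1) = t^(n+1) • (x^(n+1) * d) + c • x^n := by
  have hdx : d * x = t • (x * d) + 1 := by
    rw [← h]; abel
  intro n
  induction n with
  | zero => exact ⟨1, by simpa using hdx⟩
  | succ n ih =>
    obtain ⟨c, hc⟩ := ih
    refine ⟨t*c+1, ?_⟩
    have e1 : d * x ^ (n+2) = (d * x) * x^(n+1) := by
      rw [pow_succ' x (n+1), ← mul_assoc]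
    rw [e1, hdx, add_mul, one_mul, smul_mul_assoc, mul_assoc, hc]
    simp only [mul_add, mul_smul_comm, smul_smul, add_smul, one_smul, smul_add]
    rw [← mul_assoc, ← pow_succ' x (n+1), ← pow_succ' x n, ← pow_succ' t (n+1)]
    module

lemma keyA {R : Type*} [CommRing R] {A : Type*} [Ring A] [Algebra R A]
    (t : R) (x d : A) (h : d * x - t • (x * d) = 1) (l k : ℕ) :
    d ^ l * x ^ (l+k) - t ^ (l*(l+k)) • (x ^ (l+k) * d ^ l) ∈
      Submodule.span R ((fun i => x ^ (k+i) * d ^ i) '' Set.Iio l) := by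
  induction l generalizing k with
  | zero => simp
  | succ l ih =>
    obtain ⟨c, hc⟩ := sub1 t x d h (l+k)
    have IH1 := ih (k+1)
    have IH2 := ih k
    set v := d^l * x^(l+k+1) - t^(l*(l+k+1)) • (x^(l+k+1) * d^l) with hv
    set w := d^l * x^(l+k) - t^(l*(l+k)) • (x^(l+k) * d^l) with hw
    have key : d^(l+1) * x^(l+1+k) - t^((l+1)*(l+1+k)) • (x^(l+1+k) * d^(l+1))
        = t^(l+k+1) • (v * d) + c • w + (c * t^(l*(l+k))) • (x^(l+k) * d^l) := by
      have e0 : l + 1 + k = l + k + 1 := by omega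
      rw [e0]
      have e5 : d^(l+1) * x^(l+k+1)
          = t^(l+k+1) • (d^l * (x^(l+k+1) * d)) + c • (d^l * x^(l+k)) := by
        rw [pow_succ, mul_assoc, hc, mul_add, mul_smul_comm, mul_smul_comm]
      rw [e5, hv, hw]
      simp only [sub_mul, smul_mul_assoc, smul_sub, smul_smul, pow_succ, mul_assoc]
      match_scalars <;> ring
    rw [key]
    refine Submodule.add_mem _ (Submodule.add_mem _ ?_ ?_) ?_
    · -- t^(l+k+1) • (v * d)
      refine Submodule.smul_mem _ _ ?_
      have : v * d = (LinearMap.mulRight R d) v := rfl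
      rw [this]
      have h1 : (LinearMap.mulRight R d) v ∈
          Submodule.map (LinearMap.mulRight R d)
            (Submodule.span R ((fun i => x ^ (k+1+i) * d ^ i) '' Set.Iio l)) :=
        Submodule.mem_map_of_mem IH1
      rw [Submodule.map_span] at h1
      refine Submodule.span_le.mpr ?_ h1
      rintro _ ⟨_, ⟨i, hi, rfl⟩, rfl⟩
      refine Submodule.subset_span ⟨i+1, ?_, ?_⟩
      · simpa using Nat.succ_lt_succ hi
      · simp only [LinearMap.mulRight_apply]
        rw [mul_assoc, ← pow_succ d i]
        congr 2
        omega
    · -- c • w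
      refine Submodule.smul_mem _ _ ?_
      refine Submodule.span_mono ?_ IH2
      exact Set.image_mono (fun i hi => lt_trans hi (Nat.lt_succ_self l))
    · -- (c * t^(l*(l+k))) • (x^(l+k) * d^l)
      refine Submodule.smul_mem _ _ ?_
      refine Submodule.subset_span ⟨l, Nat.lt_succ_self l, ?_⟩
      show x ^ (k + l) * d ^ l = x ^ (l + k) * d ^ l
      rw [Nat.add_comm k l]

/-- Over `R = ℂ[t,t⁻¹]` (formalized as any commutative ring `R` with a unit `t`),
in the quantized Weyl algebra `A^(t)` with PBW basis `{x^i ∂^j}`, writing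
`[∂^l, x^l] = ∑ a_{i,l} x^i ∂^i`, the top coefficient is `a_{l,l} = t^(l²) - 1`. -/
theorem stmt15 {R : Type*} [CommRing R] {A : Type*} [Ring A] [Algebra R A]
    (t : R) (ht : IsUnit t) (x d : A) (h : d * x - t • (x * d) = 1)
    (B : Module.Basis (ℕ × ℕ) R A) (hB : ∀ p : ℕ × ℕ, B p = x ^ p.1 * d ^ p.2)
    (l : ℕ) :
    B.repr (d ^ l * x ^ l - x ^ l * d ^ l) (l, l) = t ^ (l ^ 2) - 1 := by
  have hu : d ^ l * x ^ l - t ^ (l ^ 2) • (x ^ l * d ^ l) ∈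
      Submodule.span R ((fun i => x ^ (0+i) * d ^ i) '' Set.Iio l) := by
    have := keyA t x d h l 0
    simpa [sq] using this
  -- the linear functional reading off the (l,l) coefficient
  set φ : A →ₗ[R] R := (Finsupp.lapply (l, l)).comp B.repr.toLinearMap with hφ
  have hker : Submodule.span R ((fun i => x ^ (0+i) * d ^ i) '' Set.Iio l)
      ≤ LinearMap.ker φ := by
    rw [Submodule.span_le]
    rintro _ ⟨i, hi, rfl⟩
    have : x ^ (0+i) * d ^ i = B (i, i) := by rw [hB (i, i), zero_add]
    simp only [SetLike.mem_coe, LinearMap.mem_ker, hφ, LinearMap.comp_apply,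
      LinearEquiv.coe_toLinearMap, Finsupp.lapply_apply, this]
    rw [B.repr_self]
    rw [Finsupp.single_apply_eq_zero]
    intro he
    exact absurd (Prod.ext_iff.mp he).1 (Nat.ne_of_lt hi).symm
  have h0 : φ (d ^ l * x ^ l - t ^ (l ^ 2) • (x ^ l * d ^ l)) = 0 := hker hu
  have hsplit : d ^ l * x ^ l - x ^ l * d ^ l
      = (d ^ l * x ^ l - t ^ (l ^ 2) • (x ^ l * d ^ l))
        + (t ^ (l ^ 2) - 1) • (x ^ l * d ^ l) := by
    rw [sub_smul, one_smul]; abel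
  have hBl : φ (x ^ l * d ^ l) = 1 := by
    have : x ^ l * d ^ l = B (l, l) := (hB (l, l)).symm
    simp [hφ, this, B.repr_self]
  have : B.repr (d ^ l * x ^ l - x ^ l * d ^ l) (l, l)
      = φ (d ^ l * x ^ l - x ^ l * d ^ l) := rfl
  rw [this, hsplit, map_add, h0, map_smul, hBl, zero_add, smul_eq_mul, mul_one]
end

section
/- In the quantized Weyl algebra A^{(t)} over R = ℂ[t,t^{-1}], with f = 1 - (1-t)x∂, the assignment x ↦ x, ∂ ↦ ∂ + F(x)·f (for any polynomial F(x) in x) defines an algebra endomorphism of A^{(t)}, i.e., (∂ + F(x)f)·x - t·x·(∂ + F(x)f) = 1. Its specialization at t = 1 is the automorphism x ↦ x, ∂ ↦ ∂ + F(x) of the Weyl algebra A_1. -/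
open Polynomial

private lemma aux_comm {R A : Type*} [CommRing R] [Ring A] [Algebra R A]
    (x : A) (p : R[X]) : x * aeval x p = aeval x p * x := by
  induction p using Polynomial.induction_on' with
  | add p q hp hq => simp [mul_add, add_mul, hp, hq]
  | monomial n a =>
      simp only [aeval_monomial]
      rw [← mul_assoc, ← Algebra.commutes, mul_assoc, mul_assoc, ← pow_succ, ← pow_succ']

private lemma aux_pi {R A B : Type*} [CommRing R] [Ring A] [Algebra R A]
    [Ring B] [Algebra ℂ B] (x : A) (x₁ : B) (ε : R →+* ℂ) (π : A →+* B)
    (hπx : π x = x₁) (hπs : ∀ (r : R) (a : A), π (r • a) = ε r • π a)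
    (p : R[X]) : π (aeval x p) = aeval x₁ (p.map ε) := by
  induction p using Polynomial.induction_on' with
  | add p q hp hq => simp [hp, hq]
  | monomial n a =>
      have : aeval x (monomial n a) = a • x ^ n := by
        rw [aeval_monomial, Algebra.smul_def]
      rw [this, hπs, Polynomial.map_monomial, aeval_monomial, Algebra.smul_def, map_pow, hπx]

/-- In the quantized Weyl algebra `A^(t)` over `R = ℂ[t,t⁻¹]` (formalized as any
commutative ring `R` with a unit `t` and a specialization `ε : R → ℂ` with `ε t = 1`),
with `f = 1 - (1-t)·x∂`, the assignment `x ↦ x, ∂ ↦ ∂ + F(x)·f` satisfies the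
defining relation `(∂ + F(x)f)·x - t·x·(∂ + F(x)f) = 1`, hence defines an algebra
endomorphism; and under any specialization `π` at `t = 1` to the Weyl algebra `A_1`
it specializes to the automorphism `x ↦ x, ∂ ↦ ∂ + F(x)`. -/
theorem stmt17 {R : Type*} [CommRing R] {A : Type*} [Ring A] [Algebra R A]
    (t : R) (ht : IsUnit t) (x d : A) (h : d * x - t • (x * d) = 1)
    (f : A) (hf : f = 1 - (1 - t) • (x * d))
    {B : Type*} [Ring B] [Algebra ℂ B] (x₁ d₁ : B) (h₁ : d₁ * x₁ - x₁ * d₁ = 1)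
    (ε : R →+* ℂ) (hε : ε t = 1)
    (π : A →+* B) (hπx : π x = x₁) (hπd : π d = d₁)
    (hπs : ∀ (r : R) (a : A), π (r • a) = ε r • π a) :
    ∀ p : R[X],
      ((d + aeval x p * f) * x - t • (x * (d + aeval x p * f)) = 1) ∧
      π (d + aeval x p * f) = d₁ + aeval x₁ (p.map ε) ∧ π x = x₁ := by
  intro p
  have hdx : d * x = 1 + t • (x * d) := by rw [← h]; rw [sub_add_cancel]
  have hfx : f * x = t • (x * f) := by
    rw [hf]
    rw [sub_mul, one_mul, smul_mul_assoc, mul_assoc, hdx, mul_add, mul_one,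
      mul_smul_comm, mul_sub, mul_one, mul_smul_comm, smul_add, smul_smul,
      smul_sub, smul_smul]
    module
  have hF := aux_comm x p
  have hπf : π f = 1 := by
    rw [hf, map_sub, map_one, hπs]
    have : ε (1 - t) = 0 := by simp [hε]
    rw [this, zero_smul, sub_zero]
  refine ⟨?_, ?_, hπx⟩
  · calc (d + aeval x p * f) * x - t • (x * (d + aeval x p * f))
        = (d * x - t • (x * d)) + (aeval x p * (f * x) - t • (x * (aeval x p * f))) := by
          rw [add_mul, mul_add, smul_add, mul_assoc]; abel
      _ = 1 := by
          rw [hfx, mul_smul_comm, ← mul_assoc, ← hF, mul_assoc, sub_self, add_zero, h]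
  · rw [map_add, map_mul, hπd, hπf, mul_one, aux_pi x x₁ ε π hπx hπs]
end

section
/- In the quantized Weyl algebra A^{(t)} over R = ℂ[t,t^{-1}] with f = 1-(1-t)x∂, for any element P = Σ a_{α,β} x^α ∂^β (finite sum over the PBW basis), setting Q = Σ a_{α,β} t^{α-β} x^α ∂^β, one has f·P = Q·f. In particular {f^n : n ≥ 0} is an Ore set: for every P there exists Q with f·P = Q·f. -/
/-- In the quantized Weyl algebra `A^(t)` over `R = ℂ[t,t⁻¹]` (formalized as any
commutative ring `R` with a unit `t`), with `f = 1 - (1-t)·x∂`: for any element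
`P = ∑ a_{α,β} x^α ∂^β` (finite sum over the PBW monomials), setting
`Q = ∑ t^(α-β) a_{α,β} x^α ∂^β` one has `f·P = Q·f`. In particular (when the PBW
monomials span `A`), for every `P` there exists `Q` with `f·P = Q·f`, so
`{f^n : n ≥ 0}` is an Ore set. -/
theorem stmt19 {R : Type*} [CommRing R] {A : Type*} [Ring A] [Algebra R A]
    (u : Rˣ) (x d : A) (h : d * x - (u : R) • (x * d) = 1)
    (f : A) (hf : f = 1 - (1 - (u : R)) • (x * d))
    (hspan : Submodule.span R (Set.range fun p : ℕ × ℕ => x ^ p.1 * d ^ p.2) = ⊤) :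
    (∀ a : (ℕ × ℕ) →₀ R,
      f * (a.sum fun p c => c • (x ^ p.1 * d ^ p.2)) =
        (a.sum fun p c =>
          (((u ^ ((p.1 : ℤ) - (p.2 : ℤ)) : Rˣ) : R) * c) • (x ^ p.1 * d ^ p.2)) * f) ∧
    (∀ P : A, ∃ Q : A, f * P = Q * f) := by
  have hdx : d * x = 1 + (u : R) • (x * d) := by
    have := sub_eq_iff_eq_add.mp h
    simpa using this
  have hfx : f * x = (u : R) • (x * f) := by
    rw [hf]
    simp only [sub_mul, mul_sub, one_mul, mul_one, smul_mul_assoc, mul_smul_comm,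
      mul_assoc, hdx, smul_add, smul_smul, mul_add, smul_sub]
    module
  have hdf : d * f = (u : R) • (f * d) := by
    rw [hf]
    simp only [sub_mul, mul_sub, one_mul, mul_one, smul_mul_assoc, mul_smul_comm,
      ← mul_assoc, hdx, add_mul, smul_add, smul_smul, mul_add, smul_sub]
    module
  have hfd : f * d = ((u⁻¹ : Rˣ) : R) • (d * f) := by
    rw [hdf, smul_smul]
    norm_cast
    rw [inv_mul_cancel]
    simp
  have hxpow : ∀ n : ℕ, f * x ^ n = ((u ^ n : Rˣ) : R) • (x ^ n * f) := by
    intro n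
    induction n with
    | zero => simp
    | succ n ih =>
      rw [pow_succ, ← mul_assoc, ih, smul_mul_assoc, mul_assoc, hfx, mul_smul_comm,
        smul_smul, pow_succ]
      push_cast
      rw [mul_assoc]
  have hdpow : ∀ n : ℕ, f * d ^ n = (((u⁻¹) ^ n : Rˣ) : R) • (d ^ n * f) := by
    intro n
    induction n with
    | zero => simp
    | succ n ih =>
      rw [pow_succ, ← mul_assoc, ih, smul_mul_assoc, mul_assoc, hfd, mul_smul_comm,
        smul_smul, pow_succ]
      push_cast
      rw [mul_assoc]
  have hmono : ∀ p : ℕ × ℕ, f * (x ^ p.1 * d ^ p.2) =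
      ((u ^ ((p.1 : ℤ) - (p.2 : ℤ)) : Rˣ) : R) • (x ^ p.1 * d ^ p.2 * f) := by
    rintro ⟨α, β⟩
    have : (u ^ ((α : ℤ) - (β : ℤ)) : Rˣ) = u ^ α * (u⁻¹) ^ β := by
      rw [zpow_sub, zpow_natCast, zpow_natCast, inv_pow]
    rw [this, ← mul_assoc, hxpow, smul_mul_assoc, mul_assoc, hdpow, mul_smul_comm,
      smul_smul]
    push_cast
    rw [← mul_assoc]
  have part1 : ∀ a : (ℕ × ℕ) →₀ R,
      f * (a.sum fun p c => c • (x ^ p.1 * d ^ p.2)) =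
        (a.sum fun p c =>
          (((u ^ ((p.1 : ℤ) - (p.2 : ℤ)) : Rˣ) : R) * c) • (x ^ p.1 * d ^ p.2)) * f := by
    intro a
    rw [Finsupp.sum, Finsupp.sum, Finset.mul_sum, Finset.sum_mul]
    refine Finset.sum_congr rfl fun p _ => ?_
    rw [mul_smul_comm, hmono, smul_smul, smul_mul_assoc, mul_comm]
  refine ⟨part1, fun P => ?_⟩
  have hP : P ∈ Submodule.span R (Set.range fun p : ℕ × ℕ => x ^ p.1 * d ^ p.2) := by
    rw [hspan]; trivial
  obtain ⟨a, ha⟩ := Finsupp.mem_span_range_iff_exists_finsupp.mp hP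
  exact ⟨_, by rw [← ha, part1 a]⟩
end
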